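/- arXiv:1512.04123 — 3 statements merged into one kernel-verified Lean document; each statement's English description precedes it below -/
import Mathlib

section
/- Every Latin square L of order n has an empty cube of side s = ⌊√(n + 1/4) − 1/2⌋; that is, there exist sets A, B, C ⊆ [n] with |A| = |B| = |C| = s and L(a,b) ≠ c for all a ∈ A, b ∈ B, c ∈ C. -/
lemma stmt_3_aux (n : ℕ) : let s := ⌊Real.sqrt (n + 1/4) - 1/2⌋₊; s * (s + 1) ≤ n := by
  intro s
  by_cases hx : (0:ℝ) ≤ Real.sqrt (n + 1/4) - 1/2
  · have h1 : (s : ℝ) ≤ Real.sqrt (n + 1/4) - 1/2 := Nat.floor_le hx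
    have h2 : (s : ℝ) + 1/2 ≤ Real.sqrt (n + 1/4) := by linarith
    have h3 : ((s : ℝ) + 1/2)^2 ≤ (n : ℝ) + 1/4 := by
      have hnn : (0:ℝ) ≤ (n : ℝ) + 1/4 := by positivity
      have := Real.sq_sqrt hnn
      nlinarith [sq_nonneg (Real.sqrt (n + 1/4) - ((s:ℝ) + 1/2))]
    have h4 : (s : ℝ) * (s + 1) ≤ (n : ℝ) := by nlinarith
    exact_mod_cast h4
  · have : s = 0 := Nat.floor_eq_zero.mpr (by linarith [not_le.mp hx])
    simp [this]

theorem stmt_3 (n : ℕ) (L : Fin n → Fin n → Fin n)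
    (hrow : ∀ i, Function.Bijective (L i))
    (hcol : ∀ j, Function.Bijective fun i => L i j) :
    ∃ A B C : Finset (Fin n),
      A.card = ⌊Real.sqrt (n + 1/4) - 1/2⌋₊ ∧
      B.card = ⌊Real.sqrt (n + 1/4) - 1/2⌋₊ ∧
      C.card = ⌊Real.sqrt (n + 1/4) - 1/2⌋₊ ∧
      ∀ a ∈ A, ∀ b ∈ B, ∀ c ∈ C, L a b ≠ c := by
  set s := ⌊Real.sqrt (n + 1/4) - 1/2⌋₊ with hs
  have hsn : s * (s + 1) ≤ n := stmt_3_aux n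
  have hsle : s ≤ n := le_trans (Nat.le_mul_of_pos_right s (Nat.succ_pos s)) hsn
  have hcardu : (Finset.univ : Finset (Fin n)).card = n := Finset.card_univ.trans (Fintype.card_fin n)
  obtain ⟨A, -, hA⟩ := Finset.exists_subset_card_eq (show s ≤ (Finset.univ : Finset (Fin n)).card by rw [hcardu]; exact hsle)
  obtain ⟨B, -, hB⟩ := Finset.exists_subset_card_eq (show s ≤ (Finset.univ : Finset (Fin n)).card by rw [hcardu]; exact hsle)
  set U : Finset (Fin n) := (A ×ˢ B).image (fun p => L p.1 p.2) with hU
  have hUcard : U.card ≤ s * s := by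
    calc U.card ≤ (A ×ˢ B).card := Finset.card_image_le
    _ = s * s := by rw [Finset.card_product, hA, hB]
  have hcompl : s ≤ (Finset.univ \ U).card := by
    rw [Finset.card_sdiff_of_subset (Finset.subset_univ U), hcardu]
    rw [Nat.mul_succ] at hsn
    omega
  obtain ⟨C, hCsub, hC⟩ := Finset.exists_subset_card_eq hcompl
  refine ⟨A, B, C, hA, hB, hC, ?_⟩
  intro a ha b hb c hc h
  have hmem : L a b ∈ U := Finset.mem_image.mpr ⟨(a, b), Finset.mem_product.mpr ⟨ha, hb⟩, rfl⟩
  have := hCsub hc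
  rw [Finset.mem_sdiff] at this
  exact this.2 (h ▸ hmem)
end

section
/- Let Y₁, ..., Y_N be Bernoulli (0/1-valued) random variables such that for every subset S ⊆ [N], P(∀ i ∈ S, Y_i = 1) ≤ p^{|S|} for some 0 < p < 1, and let Y = Y₁ + ... + Y_N. Then for every δ > 0, P(Y ≥ (1+δ) N p) ≤ exp(−δ²·N·p/(2+δ)). -/
/-!
For `{0,1}`-valued `Yᵢ` one has `(1 + δ) ^ Y = ∏ᵢ (1 + δ Yᵢ) = ∑_S δ^|S| ∏_{i ∈ S} Yᵢ`, and
`∏_{i ∈ S} Yᵢ` is the indicator of `{∀ i ∈ S, Yᵢ = 1}`. The correlation hypothesis therefore bounds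
the moment generating function of `Y` at `log (1 + δ)` exactly as independence would:
`E[(1 + δ) ^ Y] ≤ ∑_S (δ p)^|S| = (1 + δ p) ^ N ≤ exp (δ N p)`. The usual Chernoff argument then
applies, and `log (1 + δ) ≥ 2δ / (2 + δ)` turns the exponent into `-δ² N p / (2 + δ)`.
-/

open MeasureTheory ProbabilityTheory Finset Real

lemma prod_one_add_mul_eq_sum_powerset {ι : Type*} (δ : ℝ) (x : ι → ℝ) (s : Finset ι) :
    ∏ i ∈ s, (1 + δ * x i) = ∑ S ∈ s.powerset, δ ^ #S * ∏ i ∈ S, x i := by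
  rw [prod_one_add]
  refine sum_congr rfl fun S _ => ?_
  rw [prod_mul_distrib, prod_const]

lemma exp_log_one_add_mul_sum_eq_prod {ι : Type*} [Fintype ι] {x : ι → ℝ}
    (hx : ∀ i, x i = 0 ∨ x i = 1) {δ : ℝ} (hδ : -1 < δ) :
    exp (log (1 + δ) * ∑ i, x i) = ∏ i, (1 + δ * x i) := by
  rw [mul_sum, exp_sum]
  refine prod_congr rfl fun i _ => ?_
  rcases hx i with h | h
  · simp [h]
  · rw [h, mul_one, mul_one, exp_log (by linarith)]

lemma prod_eq_indicator_of_zero_or_one {Ω ι : Type*} {Y : ι → Ω → ℝ}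
    (h01 : ∀ i ω, Y i ω = 0 ∨ Y i ω = 1) (S : Finset ι) :
    (fun ω => ∏ i ∈ S, Y i ω) = {ω | ∀ i ∈ S, Y i ω = 1}.indicator 1 := by
  funext ω
  simp only [Set.indicator_apply, Set.mem_ofPred_eq, Pi.one_apply]
  split_ifs with h
  · exact prod_eq_one h
  · push Not at h
    obtain ⟨i, hiS, hi⟩ := h
    exact prod_eq_zero hiS ((h01 i ω).resolve_right hi)

section CorrelatedBernoulli

variable {Ω ι : Type*} [MeasurableSpace Ω] {μ : Measure Ω} {Y : ι → Ω → ℝ}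

lemma measurableSet_forall_eq_one (hmeas : ∀ i, Measurable (Y i)) (S : Finset ι) :
    MeasurableSet {ω | ∀ i ∈ S, Y i ω = 1} := by
  simp_rw [Set.ofPred_forall]
  exact S.measurableSet_biInter fun i _ => hmeas i (measurableSet_singleton 1)

lemma integrable_prod_of_zero_or_one [IsFiniteMeasure μ] (hmeas : ∀ i, Measurable (Y i))
    (h01 : ∀ i ω, Y i ω = 0 ∨ Y i ω = 1) (S : Finset ι) :
    Integrable (fun ω => ∏ i ∈ S, Y i ω) μ := by
  rw [prod_eq_indicator_of_zero_or_one h01 S]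
  exact (integrable_const 1).indicator (measurableSet_forall_eq_one hmeas S)

lemma integral_prod_le_pow_card (hmeas : ∀ i, Measurable (Y i))
    (h01 : ∀ i ω, Y i ω = 0 ∨ Y i ω = 1) {p : ℝ} (hp : 0 ≤ p)
    (hcorr : ∀ S : Finset ι, μ {ω | ∀ i ∈ S, Y i ω = 1} ≤ ENNReal.ofReal (p ^ #S))
    (S : Finset ι) :
    ∫ ω, ∏ i ∈ S, Y i ω ∂μ ≤ p ^ #S := by
  rw [prod_eq_indicator_of_zero_or_one h01 S,
    integral_indicator_one (measurableSet_forall_eq_one hmeas S)]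
  exact ENNReal.toReal_le_of_le_ofReal (by positivity) (hcorr S)

variable [Fintype ι] [IsFiniteMeasure μ]

lemma integrable_exp_log_one_add_mul_sum (hmeas : ∀ i, Measurable (Y i))
    (h01 : ∀ i ω, Y i ω = 0 ∨ Y i ω = 1) {δ : ℝ} (hδ : -1 < δ) :
    Integrable (fun ω => exp (log (1 + δ) * ∑ i, Y i ω)) μ := by
  simp_rw [exp_log_one_add_mul_sum_eq_prod (h01 · _) hδ, prod_one_add_mul_eq_sum_powerset]
  exact integrable_finsetSum _ fun S _ =>
    (integrable_prod_of_zero_or_one hmeas h01 S).const_mul _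

lemma mgf_sum_log_one_add_le (hmeas : ∀ i, Measurable (Y i))
    (h01 : ∀ i ω, Y i ω = 0 ∨ Y i ω = 1) {p : ℝ} (hp : 0 ≤ p)
    (hcorr : ∀ S : Finset ι, μ {ω | ∀ i ∈ S, Y i ω = 1} ≤ ENNReal.ofReal (p ^ #S))
    {δ : ℝ} (hδ : 0 ≤ δ) :
    mgf (fun ω => ∑ i, Y i ω) μ (log (1 + δ)) ≤ exp (δ * p * Fintype.card ι) := by
  have hint (S : Finset ι) : Integrable (fun ω => δ ^ #S * ∏ i ∈ S, Y i ω) μ :=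
    (integrable_prod_of_zero_or_one hmeas h01 S).const_mul _
  calc mgf (fun ω => ∑ i, Y i ω) μ (log (1 + δ))
      = ∑ S ∈ univ.powerset, δ ^ #S * ∫ ω, ∏ i ∈ S, Y i ω ∂μ := by
        simp_rw [mgf, exp_log_one_add_mul_sum_eq_prod (h01 · _) (by linarith : -1 < δ),
          prod_one_add_mul_eq_sum_powerset, integral_finsetSum _ fun S _ => hint S,
          integral_const_mul]
    _ ≤ ∑ S ∈ univ.powerset, δ ^ #S * p ^ #S := by
        gcongr with S
        exact integral_prod_le_pow_card hmeas h01 hp hcorr S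
    _ = (1 + δ * p) ^ Fintype.card ι := by
        rw [← card_univ, ← prod_const, prod_one_add_mul_eq_sum_powerset]
        simp only [prod_const]
    _ ≤ exp (δ * p) ^ Fintype.card ι := by
        gcongr
        linarith [add_one_le_exp (δ * p)]
    _ = exp (δ * p * Fintype.card ι) := by
        rw [← exp_nat_mul, mul_comm]

end CorrelatedBernoulli

lemma chernoff_exponent_le {δ m : ℝ} (hδ : 0 ≤ δ) (hm : 0 ≤ m) :
    -log (1 + δ) * ((1 + δ) * m) + δ * m ≤ -(δ ^ 2 * m) / (2 + δ) := by
  have hlog := le_log_one_add_of_nonneg hδ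
  have key : δ * m - (1 + δ) * m * (2 * δ / (δ + 2)) = -(δ ^ 2 * m) / (2 + δ) := by
    field_simp
    ring
  linarith [mul_le_mul_of_nonneg_left hlog (by positivity : 0 ≤ (1 + δ) * m)]

theorem stmt_8_general {Ω : Type*} [MeasurableSpace Ω] (μ : Measure Ω) [IsProbabilityMeasure μ]
    (N : ℕ) (Y : Fin N → Ω → ℝ) (hmeas : ∀ i, Measurable (Y i))
    (h01 : ∀ i ω, Y i ω = 0 ∨ Y i ω = 1)
    (p : ℝ) (hp0 : 0 < p)
    (hcorr : ∀ S : Finset (Fin N),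
      μ {ω | ∀ i ∈ S, Y i ω = 1} ≤ ENNReal.ofReal (p ^ S.card)) :
    ∀ δ : ℝ, 0 < δ →
      μ {ω | (1 + δ) * N * p ≤ ∑ i, Y i ω}
        ≤ ENNReal.ofReal (Real.exp (-(δ ^ 2 * N * p) / (2 + δ))) := by
  intro δ hδ
  have hchernoff := measure_ge_le_exp_mul_mgf ((1 + δ) * N * p)
    (log_nonneg (by linarith : 1 ≤ 1 + δ))
    (integrable_exp_log_one_add_mul_sum (μ := μ) hmeas h01 (by linarith : -1 < δ))
  have hmgf := mgf_sum_log_one_add_le hmeas h01 hp0.le hcorr hδ.le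
  rw [Fintype.card_fin] at hmgf
  rw [ENNReal.le_ofReal_iff_toReal_le (measure_ne_top μ _) (exp_pos _).le]
  calc μ.real {ω | (1 + δ) * N * p ≤ ∑ i, Y i ω}
      ≤ exp (-log (1 + δ) * ((1 + δ) * N * p)) * exp (δ * p * N) :=
        hchernoff.trans (mul_le_mul_of_nonneg_left hmgf (exp_pos _).le)
    _ = exp (-log (1 + δ) * ((1 + δ) * (N * p)) + δ * (N * p)) := by
        rw [← exp_add]
        ring_nf
    _ ≤ exp (-(δ ^ 2 * N * p) / (2 + δ)) := by
        rw [exp_le_exp, mul_assoc (δ ^ 2)]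
        exact chernoff_exponent_le hδ.le (by positivity)

theorem stmt_8 {Ω : Type*} [MeasurableSpace Ω] (μ : Measure Ω) [IsProbabilityMeasure μ]
    (N : ℕ) (Y : Fin N → Ω → ℝ) (hmeas : ∀ i, Measurable (Y i))
    (h01 : ∀ i ω, Y i ω = 0 ∨ Y i ω = 1)
    (p : ℝ) (hp0 : 0 < p) (hp1 : p < 1)
    (hcorr : ∀ S : Finset (Fin N),
      μ {ω | ∀ i ∈ S, Y i ω = 1} ≤ ENNReal.ofReal (p ^ S.card)) :
    ∀ δ : ℝ, 0 < δ →
      μ {ω | (1 + δ) * N * p ≤ ∑ i, Y i ω}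
        ≤ ENNReal.ofReal (Real.exp (-(δ ^ 2 * N * p) / (2 + δ))) :=
  stmt_8_general μ N Y hmeas h01 p hp0 hcorr
end

section
/- Let X be an (n,4,3)-Steiner system on [n] (every 3-element subset of [n] lies in exactly one quadruple). Define a 4-dimensional 0-1 array A on [n]⁴ by A(i,j,k,l) = 1 iff {i,j,k,l} ∈ X (with i,j,k,l distinct) or (i = j and k = l) [i.e., A(i,i,j,j) = 1 for all i, j]. Then A is a 3-dimensional permutation: for every choice of three coordinates there is exactly one value of the fourth coordinate making A equal to 1. -/
set_option maxHeartbeats 1000000 in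
theorem stmt_16 (n : ℕ) (X : Finset (Finset (Fin n)))
    (hcard : ∀ T ∈ X, T.card = 4)
    (hcover : ∀ s : Finset (Fin n), s.card = 3 → ∃! T, T ∈ X ∧ s ⊆ T)
    (A : Fin n → Fin n → Fin n → Fin n → Prop)
    (hA : ∀ i j k l, A i j k l ↔
      ((({i, j, k, l} : Finset (Fin n)).card = 4 ∧ ({i, j, k, l} : Finset (Fin n)) ∈ X) ∨
        ∃ a b : Fin n, ({i, j, k, l} : Multiset (Fin n)) = {a, a, b, b})) :
    (∀ j k l, ∃! i, A i j k l) ∧ (∀ i k l, ∃! j, A i j k l) ∧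
    (∀ i j l, ∃! k, A i j k l) ∧ (∀ i j k, ∃! l, A i j k l) := by
  have card3le : ∀ a b c : Fin n, ({a,b,c}:Finset (Fin n)).card ≤ 3 := by
    intro a b c
    apply (Finset.card_insert_le _ _).trans
    have := Finset.card_insert_le b ({c}:Finset (Fin n))
    simp at this ⊢; omega
  have evc : ∀ x a b : Fin n, Even (Multiset.count x ({a,a,b,b}:Multiset (Fin n))) := by
    intro x a b
    simp [Multiset.count_cons, Multiset.count_singleton]
    split_ifs <;> decide
  have key : ∀ j k l : Fin n, ∃! i : Fin n,
      ((({i,j,k,l} : Finset (Fin n)).card = 4 ∧ ({i,j,k,l} : Finset (Fin n)) ∈ X) ∨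
        ∃ a b : Fin n, ({i,j,k,l} : Multiset (Fin n)) = {a,a,b,b}) := by
    intro j k l
    -- a helper to kill the doubled case when we know the count of some x in {i,j,k,l} is odd
    by_cases hjk : j = k
    · subst hjk
      by_cases hjl : j = l
      · subst hjl
        refine ⟨j, Or.inr ⟨j, j, rfl⟩, ?_⟩
        rintro i (⟨hc, -⟩ | ⟨a, b, hm⟩)
        · exfalso
          have h2 : ({i,j,j,j}:Finset (Fin n)) = {i,j,j} := by ext x; simp; try tauto
          rw [h2] at hc; have := card3le i j j; omega
        · by_contra hij
          have hc := congrArg (Multiset.count i) hm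
          have he := evc i a b
          simp only [Multiset.insert_eq_cons, Multiset.count_cons, Multiset.count_singleton,
            Multiset.count_zero] at hc he
          split_ifs at hc he <;> simp_all
      · -- j = k ≠ l, answer i = l
        have hml : ({l,j,j,l} : Multiset (Fin n)) = {j,j,l,l} := by
          simp only [Multiset.insert_eq_cons]
          rw [Multiset.cons_swap l j, Multiset.cons_swap l j]
        refine ⟨l, Or.inr ⟨j, l, hml⟩, ?_⟩
        rintro i (⟨hc, -⟩ | ⟨a, b, hm⟩)
        · exfalso
          have h2 : ({i,j,j,l}:Finset (Fin n)) = {i,j,l} := by ext x; simp; try tauto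
          rw [h2] at hc; have := card3le i j l; omega
        · by_contra hil
          have hli : l ≠ i := fun h => hil h.symm
          have hlj : l ≠ j := fun h => hjl h.symm
          have hc := congrArg (Multiset.count l) hm
          have he := evc l a b
          simp only [Multiset.insert_eq_cons, Multiset.count_cons, Multiset.count_singleton,
            Multiset.count_zero] at hc he
          split_ifs at hc he <;> simp_all
    · by_cases hjl : j = l
      · subst hjl
        -- j = l ≠ k, answer i = k
        have hml : ({k,j,k,j} : Multiset (Fin n)) = {j,j,k,k} := by
          simp only [Multiset.insert_eq_cons]
          rw [show (({j}:Multiset (Fin n))) = j ::ₘ 0 from rfl,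
              show (({k}:Multiset (Fin n))) = k ::ₘ 0 from rfl]
          rw [Multiset.cons_swap k j, Multiset.cons_swap k j, Multiset.cons_swap k j]
        refine ⟨k, Or.inr ⟨j, k, hml⟩, ?_⟩
        rintro i (⟨hc, -⟩ | ⟨a, b, hm⟩)
        · exfalso
          have h2 : ({i,j,k,j}:Finset (Fin n)) = {i,j,k} := by ext x; simp; try tauto
          rw [h2] at hc; have := card3le i j k; omega
        · by_contra hik
          have hki : k ≠ i := fun h => hik h.symm
          have hkj : k ≠ j := fun h => hjk h.symm
          have hc := congrArg (Multiset.count k) hm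
          have he := evc k a b
          simp only [Multiset.insert_eq_cons, Multiset.count_cons, Multiset.count_singleton,
            Multiset.count_zero] at hc he
          split_ifs at hc he <;> simp_all
      · by_cases hkl : k = l
        · subst hkl
          -- k = l ≠ j, answer i = j
          have hml : ({j,j,k,k} : Multiset (Fin n)) = {j,j,k,k} := rfl
          refine ⟨j, Or.inr ⟨j, k, hml⟩, ?_⟩
          rintro i (⟨hc, -⟩ | ⟨a, b, hm⟩)
          · exfalso
            have h2 : ({i,j,k,k}:Finset (Fin n)) = {i,j,k} := by ext x; simp; try tauto
            rw [h2] at hc; have := card3le i j k; omega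
          · by_contra hij
            have hji : j ≠ i := fun h => hij h.symm
            have hc := congrArg (Multiset.count j) hm
            have he := evc j a b
            simp only [Multiset.insert_eq_cons, Multiset.count_cons, Multiset.count_singleton,
              Multiset.count_zero] at hc he
            split_ifs at hc he <;> simp_all
        · -- all of j, k, l distinct
          have hs : ({j,k,l} : Finset (Fin n)).card = 3 :=
            Finset.card_eq_three.mpr ⟨j, k, l, hjk, hjl, hkl, rfl⟩
          obtain ⟨T, ⟨hTX, hsub⟩, huT⟩ := hcover {j,k,l} hs
          have hT4 := hcard T hTX
          have hds : (T \ {j,k,l}).card = 1 := by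
            rw [Finset.card_sdiff_of_subset hsub, hT4, hs]
          obtain ⟨i, hi⟩ := Finset.card_eq_one.mp hds
          have hiT : i ∈ T := by
            have : i ∈ T \ {j,k,l} := hi ▸ Finset.mem_singleton_self i
            exact (Finset.mem_sdiff.mp this).1
          have hins : i ∉ ({j,k,l} : Finset (Fin n)) := by
            have : i ∈ T \ {j,k,l} := hi ▸ Finset.mem_singleton_self i
            exact (Finset.mem_sdiff.mp this).2
          have hsubT : ({i,j,k,l} : Finset (Fin n)) ⊆ T := by
            intro x hx
            simp only [Finset.mem_insert, Finset.mem_singleton] at hx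
            rcases hx with rfl | rfl | rfl | rfl
            · exact hiT
            · exact hsub (by simp)
            · exact hsub (by simp)
            · exact hsub (by simp)
          have hc4 : ({i,j,k,l} : Finset (Fin n)).card = 4 := by
            rw [Finset.card_insert_of_notMem hins, hs]
          have hTeq : ({i,j,k,l} : Finset (Fin n)) = T :=
            Finset.eq_of_subset_of_card_le hsubT (by omega)
          refine ⟨i, Or.inl ⟨hc4, hTeq ▸ hTX⟩, ?_⟩
          rintro i' (⟨hc', hm'⟩ | ⟨a, b, hm⟩)
          · -- i' gives a quadruple in X containing {j,k,l}
            have hsub' : ({j,k,l} : Finset (Fin n)) ⊆ {i',j,k,l} := by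
              intro x hx; simp only [Finset.mem_insert, Finset.mem_singleton] at hx ⊢; tauto
            have hT' : ({i',j,k,l} : Finset (Fin n)) = T := huT _ ⟨hm', hsub'⟩
            have hi'ns : i' ∉ ({j,k,l} : Finset (Fin n)) := by
              intro hmem
              have : ({i',j,k,l} : Finset (Fin n)) = {j,k,l} :=
                Finset.insert_eq_self.mpr hmem
              rw [this, hs] at hc'; omega
            have : i' ∈ T \ {j,k,l} := Finset.mem_sdiff.mpr ⟨hT' ▸ (by simp), hi'ns⟩
            rw [hi] at this
            exact Finset.mem_singleton.mp this
          · exfalso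
            have hfs := congrArg Multiset.toFinset hm
            simp only [Multiset.toFinset_cons, Multiset.toFinset_singleton,
              Multiset.insert_eq_cons] at hfs
            have h2 : ({a,a,b,b} : Finset (Fin n)) = {a,b} := by
              ext x; simp only [Finset.mem_insert, Finset.mem_singleton]; try tauto
            have h3 : ({j,k,l} : Finset (Fin n)) ⊆ ({i',j,k,l} : Finset (Fin n)) := by
              intro x hx
              simp only [Finset.mem_insert, Finset.mem_singleton] at hx ⊢
              rcases hx with h | h | h
              · exact Or.inr (Or.inl h)
              · exact Or.inr (Or.inr (Or.inl h))
              · exact Or.inr (Or.inr (Or.inr h))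
            have h3' : ({j,k,l} : Finset (Fin n)) ⊆ ({a,a,b,b} : Finset (Fin n)) := by
              rw [← hfs]; exact h3
            have h4 := Finset.card_le_card h3'
            have h5 : ({a,b} : Finset (Fin n)).card ≤ 2 := by
              apply (Finset.card_insert_le _ _).trans; simp
            rw [hs, h2] at h4
            omega
  have ms2 : ∀ i j k l : Fin n, ({i,j,k,l} : Multiset (Fin n)) = {j,i,k,l} := by
    intro i j k l
    simp only [Multiset.insert_eq_cons]; rw [Multiset.cons_swap]
  have ms3 : ∀ i j k l : Fin n, ({i,j,k,l} : Multiset (Fin n)) = {k,j,i,l} := by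
    intro i j k l
    simp only [Multiset.insert_eq_cons]
    rw [Multiset.cons_swap j k, Multiset.cons_swap i k, Multiset.cons_swap i j]
  have ms4 : ∀ i j k l : Fin n, ({i,j,k,l} : Multiset (Fin n)) = {l,j,k,i} := by
    intro i j k l
    simp only [Multiset.insert_eq_cons]
    rw [show (({l}:Multiset (Fin n))) = l ::ₘ 0 from rfl,
        show (({i}:Multiset (Fin n))) = i ::ₘ 0 from rfl]
    rw [Multiset.cons_swap k l, Multiset.cons_swap j l, Multiset.cons_swap i l,
        Multiset.cons_swap i j, Multiset.cons_swap i k]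
  have fs2 : ∀ i j k l : Fin n, ({i,j,k,l} : Finset (Fin n)) = {j,i,k,l} := by
    intro i j k l; ext x; simp; tauto
  have fs3 : ∀ i j k l : Fin n, ({i,j,k,l} : Finset (Fin n)) = {k,j,i,l} := by
    intro i j k l; ext x; simp; tauto
  have fs4 : ∀ i j k l : Fin n, ({i,j,k,l} : Finset (Fin n)) = {l,j,k,i} := by
    intro i j k l; ext x; simp; tauto
  refine ⟨?_, ?_, ?_, ?_⟩
  · intro j k l
    obtain ⟨w, hw, hu⟩ := key j k l
    exact ⟨w, (hA w j k l).mpr hw, fun y hy => hu y ((hA y j k l).mp hy)⟩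
  · intro i k l
    obtain ⟨w, hw, hu⟩ := key i k l
    refine ⟨w, ?_, fun y hy => ?_⟩
    · show A i w k l; rw [hA, fs2, ms2]; exact hw
    · have hy' : A i y k l := hy
      rw [hA, fs2, ms2] at hy'; exact hu y hy'
  · intro i j l
    obtain ⟨w, hw, hu⟩ := key j i l
    refine ⟨w, ?_, fun y hy => ?_⟩
    · show A i j w l; rw [hA, fs3, ms3]; exact hw
    · have hy' : A i j y l := hy
      rw [hA, fs3, ms3] at hy'; exact hu y hy'
  · intro i j k
    obtain ⟨w, hw, hu⟩ := key j k i
    refine ⟨w, ?_, fun y hy => ?_⟩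
    · show A i j k w; rw [hA, fs4, ms4]; exact hw
    · have hy' : A i j k y := hy
      rw [hA, fs4, ms4] at hy'; exact hu y hy'
end
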